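/- arXiv:math/0312291 — 2 statements merged into one kernel-verified Lean document; each statement's English description precedes it below -/
import Mathlib

section
/- Kac's formula: let (X, f, μ) be an ergodic measure-preserving dynamical system on a probability space and A a measurable set with μ(A) > 0. Then the integral of the first return time r_A^1 over A with respect to μ equals 1; equivalently, the expectation of r_A^1 with respect to the conditional measure μ_A = μ(·∩A)/μ(A) equals 1/μ(A). -/
open MeasureTheory Filter

noncomputable def firstReturn {X : Type*} (f : X → X) (A : Set X) (x : X) : ℕ :=
  sInf {k | 1 ≤ k ∧ f^[k] x ∈ A}

/-- Kac's formula: for an ergodic measure-preserving system on a probability space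
and `μ A > 0`, the integral of the first return time over `A` equals `1`;
equivalently its expectation under `μ_A` equals `1/μ(A)`. -/
theorem kac_formula
    {X : Type*} [MeasurableSpace X] {μ : Measure X} [IsProbabilityMeasure μ]
    {f : X → X} (hf : Measurable f) (herg : Ergodic f μ)
    {A : Set X} (hA : MeasurableSet A) (hApos : 0 < μ A) :
    (∫ x in A, (firstReturn f A x : ℝ) ∂μ = 1) ∧
    (∫ x, (firstReturn f A x : ℝ) ∂((μ A)⁻¹ • μ.restrict A) = 1 / (μ A).toReal) := by
  classical
  set r : X → ℕ := firstReturn f A with hrdef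
  have hrx : ∀ x, r x = sInf {k | 1 ≤ k ∧ f^[k] x ∈ A} := fun x => rfl
  -- the sets W k = points avoiding A for times 0,...,k-1
  set W : ℕ → Set X := fun k => ⋂ j < k, f^[j] ⁻¹' Aᶜ with hWdef
  have hWmem : ∀ k x, x ∈ W k ↔ ∀ j < k, f^[j] x ∉ A := by
    intro k x; simp [hWdef]
  have hWmeas : ∀ k, MeasurableSet (W k) := fun k =>
    MeasurableSet.iInter fun j => MeasurableSet.iInter fun _ => (hf.iterate j) hA.compl
  have hW0 : W 0 = Set.univ := by ext x; simp [hWmem]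
  have hpre : ∀ k x, f x ∈ W k ↔ ∀ j < k, f^[j+1] x ∉ A := by
    intro k x
    rw [hWmem]
    constructor
    · intro h j hj; rw [Function.iterate_succ_apply]; exact h j hj
    · intro h j hj; rw [← Function.iterate_succ_apply]; exact h j hj
  -- the set of points that return to A
  set Rset : Set X := {x | ∃ m, 1 ≤ m ∧ f^[m] x ∈ A} with hRdef
  have hRmeas : MeasurableSet Rset := by
    have : Rset = ⋃ m, ⋃ (_ : 1 ≤ m), f^[m] ⁻¹' A := by
      ext x; simp [hRdef]
    rw [this]
    exact MeasurableSet.iUnion fun m => MeasurableSet.iUnion fun _ => (hf.iterate m) hA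
  -- level sets of the return time
  have hset : ∀ k, {x | k + 1 ≤ r x} = Rset ∩ f ⁻¹' W k := by
    intro k
    ext x
    simp only [Set.mem_setOf_eq, Set.mem_inter_iff, Set.mem_preimage, hpre, hRdef]
    constructor
    · intro hx
      have hne : {m | 1 ≤ m ∧ f^[m] x ∈ A}.Nonempty := by
        by_contra h
        rw [Set.not_nonempty_iff_eq_empty] at h
        rw [hrx, h, Nat.sInf_empty] at hx
        omega
      refine ⟨hne, ?_⟩
      intro j hj hmem
      have hle : r x ≤ j + 1 := Nat.sInf_le ⟨by omega, hmem⟩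
      omega
    · rintro ⟨hne, hav⟩
      have hne' : {m | 1 ≤ m ∧ f^[m] x ∈ A}.Nonempty := hne
      have hmem : 1 ≤ r x ∧ f^[r x] x ∈ A := by
        rw [hrx]; exact Nat.sInf_mem hne'
      by_contra h
      push_neg at h
      obtain ⟨j, hj⟩ : ∃ j, r x = j + 1 := ⟨r x - 1, by omega⟩
      exact hav j (by omega) (hj ▸ hmem.2)
  have hSmeas : ∀ k, MeasurableSet {x | k + 1 ≤ r x} := fun k => by
    rw [hset k]; exact hRmeas.inter (hf (hWmeas k))
  -- the set of points never visiting A is null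
  set Nset : Set X := ⋂ k, W k with hNdef
  have hNmem : ∀ x, x ∈ Nset ↔ ∀ j, f^[j] x ∉ A := by
    intro x
    simp only [hNdef, Set.mem_iInter, hWmem]
    exact ⟨fun h j => h (j + 1) j (Nat.lt_succ_self j), fun h k j _ => h j⟩
  have hNmeas : MeasurableSet Nset := MeasurableSet.iInter fun k => hWmeas k
  have hNsub : Nset ⊆ f ⁻¹' Nset := by
    intro x hx
    rw [Set.mem_preimage, hNmem]
    intro j
    rw [← Function.iterate_succ_apply]
    exact (hNmem x).1 hx (j + 1)
  have hμN : μ Nset = 0 := by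
    rcases herg.ae_empty_or_univ_of_ae_le_preimage' hNmeas.nullMeasurableSet
        (HasSubset.Subset.eventuallyLE hNsub) (measure_ne_top μ _) with h | h
    · exact ae_eq_empty.mp h
    · exfalso
      have hcompl : μ Nsetᶜ = 0 := ae_eq_univ.mp h
      have hAsub : A ⊆ Nsetᶜ := by
        intro x hx hxN
        exact (hNmem x).1 hxN 0 (by simpa using hx)
      exact absurd (measure_mono_null hAsub hcompl) (by exact hApos.ne')
  have hfN : μ (f ⁻¹' Nset) = 0 := by
    rw [herg.toMeasurePreserving.measure_preimage hNmeas.nullMeasurableSet, hμN]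
  -- points of A that never return are null
  have hAR : μ (A \ Rset) = 0 := by
    refine measure_mono_null ?_ hfN
    intro x hx
    rw [Set.mem_preimage, hNmem]
    intro j hj
    exact hx.2 ⟨j + 1, by omega, by rwa [Function.iterate_succ_apply]⟩
  -- the key measures
  set b : ℕ → ENNReal := fun k => μ (A ∩ f ⁻¹' W k) with hbdef
  have hkey : ∀ k, μ ((Rset ∩ f ⁻¹' W k) ∩ A) = b k := by
    intro k
    refine le_antisymm (measure_mono fun x hx => ⟨hx.2, hx.1.2⟩) ?_
    have hsub : A ∩ f ⁻¹' W k ⊆ ((Rset ∩ f ⁻¹' W k) ∩ A) ∪ (A \ Rset) := by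
      intro x hx
      by_cases hxR : x ∈ Rset
      · exact Or.inl ⟨⟨hxR, hx.2⟩, hx.1⟩
      · exact Or.inr ⟨hx.1, hxR⟩
    calc μ (A ∩ f ⁻¹' W k) ≤ μ (((Rset ∩ f ⁻¹' W k) ∩ A) ∪ (A \ Rset)) := measure_mono hsub
      _ ≤ μ ((Rset ∩ f ⁻¹' W k) ∩ A) + μ (A \ Rset) := measure_union_le _ _
      _ = μ ((Rset ∩ f ⁻¹' W k) ∩ A) := by rw [hAR, add_zero]
  -- telescoping identity
  have hWsucc : ∀ n, W (n + 1) = f ⁻¹' W n \ A := by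
    intro n
    ext x
    simp only [hWmem, Set.mem_diff, Set.mem_preimage, hpre]
    constructor
    · intro h
      exact ⟨fun j hj => h (j + 1) (by omega), by simpa using h 0 (by omega)⟩
    · rintro ⟨h1, h2⟩ j hj
      match j with
      | 0 => simpa using h2
      | (j' + 1) => exact h1 j' (by omega)
  have htel : ∀ n, ∑ k ∈ Finset.range n, b k + μ (W n) = 1 := by
    intro n
    induction n with
    | zero => simp [hW0]
    | succ n ih =>
      rw [Finset.sum_range_succ, add_assoc]
      have hsplit : b n + μ (W (n + 1)) = μ (W n) := by
        rw [hbdef]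
        simp only
        rw [hWsucc n, Set.inter_comm, measure_inter_add_diff _ hA,
          herg.toMeasurePreserving.measure_preimage (hWmeas n).nullMeasurableSet]
      rw [hsplit, ih]
  have hanti : Antitone W := by
    intro k l hkl x hx
    rw [hWmem] at hx ⊢
    exact fun j hj => hx j (lt_of_lt_of_le hj hkl)
  have hiInf : ⨅ n, μ (W n) = 0 := by
    rw [← Directed.measure_iInter (fun k => (hWmeas k).nullMeasurableSet)
      hanti.directed_ge ⟨0, measure_ne_top μ _⟩]
    exact hμN
  have hsum : ∑' k, b k = 1 := by
    rw [ENNReal.tsum_eq_iSup_nat]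
    have heq : ∀ n, ∑ k ∈ Finset.range n, b k = 1 - μ (W n) := fun n =>
      ENNReal.eq_sub_of_add_eq (measure_ne_top μ _) (htel n)
    simp only [heq]
    rw [← ENNReal.sub_iInf, hiInf, tsub_zero]
  -- the lintegral of the return time
  have hlint : ∫⁻ x in A, (r x : ENNReal) ∂μ = 1 := by
    have hptw : ∀ x, ((r x : ℕ) : ENNReal)
        = ∑' k : ℕ, Set.indicator {y | k + 1 ≤ r y} (1 : X → ENNReal) x := by
      intro x
      have h1 : ∀ k : ℕ, Set.indicator {y | k + 1 ≤ r y} (1 : X → ENNReal) x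
          = if k + 1 ≤ r x then 1 else 0 := by
        intro k; simp [Set.indicator_apply]
      rw [tsum_congr h1,
        tsum_eq_sum (s := Finset.range (r x)) (fun k hk => by
          rw [if_neg]; simp only [Finset.mem_range] at hk; omega)]
      rw [Finset.sum_congr rfl (fun k hk => by
        rw [if_pos]; simp only [Finset.mem_range] at hk; omega)]
      simp
    rw [lintegral_congr hptw,
      lintegral_tsum (fun k => ((measurable_one.indicator (hSmeas k)).aemeasurable))]
    have hterm : ∀ k, ∫⁻ x, Set.indicator {y | k + 1 ≤ r y} (1 : X → ENNReal) x
        ∂(μ.restrict A) = b k := by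
      intro k
      rw [lintegral_indicator_one (hSmeas k), Measure.restrict_apply (hSmeas k), hset k,
        hkey k]
    rw [tsum_congr hterm, hsum]
  -- measurability of the return time
  have hrmeas : Measurable r := by
    apply measurable_to_countable'
    intro n
    match n with
    | 0 =>
      have : r ⁻¹' {0} = Rsetᶜ := by
        ext x
        simp only [Set.mem_preimage, Set.mem_singleton_iff, Set.mem_compl_iff, hRdef,
          Set.mem_setOf_eq, hrx, Nat.sInf_eq_zero]
        constructor
        · rintro (h | h)
          · simp at h
          · rw [Set.eq_empty_iff_forall_notMem] at h
            rintro ⟨m, hm⟩; exact h m hm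
        · intro h
          right
          rw [Set.eq_empty_iff_forall_notMem]
          exact fun m hm => h ⟨m, hm⟩
      rw [this]; exact hRmeas.compl
    | (n + 1) =>
      have : r ⁻¹' {n + 1} = {x | n + 1 ≤ r x} ∩ {x | n + 2 ≤ r x}ᶜ := by
        ext x
        simp only [Set.mem_preimage, Set.mem_singleton_iff, Set.mem_inter_iff,
          Set.mem_compl_iff, Set.mem_setOf_eq]
        omega
      rw [this]; exact (hSmeas n).inter (hSmeas (n + 1)).compl
  have h1 : ∫ x in A, (r x : ℝ) ∂μ = 1 := by
    rw [integral_eq_lintegral_of_nonneg_ae (ae_of_all _ fun x => Nat.cast_nonneg _)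
      ((measurable_from_top.comp hrmeas).aestronglyMeasurable)]
    have : ∫⁻ a in A, ENNReal.ofReal ((r a : ℝ)) ∂μ = ∫⁻ a in A, (r a : ENNReal) ∂μ :=
      lintegral_congr fun a => ENNReal.ofReal_natCast _
    rw [this, hlint]
    simp
  refine ⟨h1, ?_⟩
  rw [integral_smul_measure, h1, smul_eq_mul, mul_one, ENNReal.toReal_inv, one_div]
end

section
/- Let (Σ_A, σ) be a topologically mixing subshift of finite type on the alphabet {1,…,N} with N ≥ 2 given by a 0-1 transition matrix A, and let φ : Σ_A → ℝ be Hölder continuous. Let A' be the (N−1)×(N−1) matrix obtained from A by deleting the first row and column, and Σ' ⊂ Σ_A the associated subshift (assumed nonempty and transitive). Then the topological pressure satisfies P_top(φ, Σ') < P_top(φ, Σ_A), i.e. removing a symbol creates a strict pressure gap. -/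
open Filter
open scoped Classical

/-- The two-sided subshift of finite type determined by a 0-1 transition matrix `M`. -/
def SFT {N : ℕ} (M : Fin N → Fin N → Bool) : Set (ℤ → Fin N) :=
  {x | ∀ n : ℤ, M (x n) (x (n + 1)) = true}

/-- The (left) shift map on bi-infinite sequences. -/
def shift {N : ℕ} (x : ℤ → Fin N) : ℤ → Fin N := fun n => x (n + 1)

/-- Partition function of the potential `φ` on the subsystem `Y`:
sum over admissible words of length `n` of `exp(sup of Birkhoff sums over the cylinder)`. -/
noncomputable def partitionFn {N : ℕ} (φ : (ℤ → Fin N) → ℝ) (Y : Set (ℤ → Fin N))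
    (n : ℕ) : ℝ :=
  ∑ w : Fin n → Fin N,
    if ({x ∈ Y | ∀ i : Fin n, x (i : ℕ) = w i}).Nonempty then
      Real.exp (sSup ((fun x => ∑ k ∈ Finset.range n, φ (shift^[k] x)) ''
        {x ∈ Y | ∀ i : Fin n, x (i : ℕ) = w i}))
    else 0

/-- Topological pressure of `φ` on the subsystem `Y`. -/
noncomputable def pressure {N : ℕ} (φ : (ℤ → Fin N) → ℝ) (Y : Set (ℤ → Fin N)) : ℝ :=
  limsup (fun n : ℕ => Real.log (partitionFn φ Y n) / n) atTop

/-!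
Hölder continuity gives Bowen's bounded distortion, so the weight of a cylinder is comparable to
`exp` of the Birkhoff sum of any of its points. Hence the partition function `Z` is
submultiplicative (the pressure is its growth rate, by Fekete) and, gluing words across bridges
of `m - 1` symbols supplied by mixing, supermultiplicative up to a constant; this gives
`Z n ≤ C * exp (n * P)` on the full shift. Into a word of length `K * m` avoiding the symbol `e`
one can insert, at any of `K` slots, a detour of `2 * m - 1` symbols through `e`. The resulting
words are pairwise distinct and lose only a constant factor of weight, so
`K * Z' (K * m) ≤ C' * Z (K * m + 2 * m - 1) ≤ C'' * exp (K * m * P)`. Comparing with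
`Z' (K * m) ≥ exp (K * m * P')` gives `P' < P` once `K` is large.
-/

open Topology Function

variable {N : ℕ}

lemma shift_iterate_apply (k : ℕ) (x : ℤ → Fin N) (i : ℤ) : (shift^[k] x) i = x (i + k) := by
  induction k generalizing i with
  | zero => simp
  | succ k ih =>
    rw [iterate_succ_apply', shift, ih]
    push_cast
    ring_nf

lemma mapsTo_shift_SFT (M : Fin N → Fin N → Bool) : Set.MapsTo shift (SFT M) (SFT M) :=
  fun _ hx n => hx (n + 1)

def word (n : ℕ) (x : ℤ → Fin N) : Fin n → Fin N := fun i => x i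

lemma word_eq_word_iff {n : ℕ} {x y : ℤ → Fin N} :
    word n x = word n y ↔ ∀ i : ℕ, i < n → x i = y i := by
  simp [word, funext_iff, Fin.forall_iff]

lemma word_add (a b : ℕ) (x : ℤ → Fin N) :
    word (a + b) x = Fin.append (word a x) (word b (shift^[a] x)) := by
  funext i
  refine Fin.addCases (fun i => ?_) (fun j => ?_) i
  · simp [word]
  · simp [word, shift_iterate_apply, add_comm]

lemma word_add_eq_word_add_iff {a b : ℕ} {x y : ℤ → Fin N} :
    word (a + b) x = word (a + b) y ↔
      word a x = word a y ∧ word b (shift^[a] x) = word b (shift^[a] y) := by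
  rw [word_add, word_add]
  refine ⟨fun h => ⟨funext fun i => ?_, funext fun j => ?_⟩, fun ⟨h₁, h₂⟩ => by rw [h₁, h₂]⟩
  · simpa using congrFun h (Fin.castAdd b i)
  · simpa using congrFun h (Fin.natAdd a j)

def cylSet (Y : Set (ℤ → Fin N)) {n : ℕ} (w : Fin n → Fin N) : Set (ℤ → Fin N) :=
  {x ∈ Y | ∀ i : Fin n, x (i : ℕ) = w i}

lemma mem_cylSet_word {Y : Set (ℤ → Fin N)} {x : ℤ → Fin N} (hx : x ∈ Y) (n : ℕ) :
    x ∈ cylSet Y (word n x) :=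
  ⟨hx, fun _ => rfl⟩

lemma word_eq_of_mem_cylSet {Y : Set (ℤ → Fin N)} {n : ℕ} {w : Fin n → Fin N}
    {x : ℤ → Fin N} (hx : x ∈ cylSet Y w) : word n x = w :=
  funext hx.2

section Distortion

variable {φ : (ℤ → Fin N) → ℝ} {Y : Set (ℤ → Fin N)} {V B : ℝ}

/-- Bowen's property of `φ` on `Y`. -/
def HasBoundedDistortion (φ : (ℤ → Fin N) → ℝ) (Y : Set (ℤ → Fin N)) (V : ℝ) : Prop :=
  ∀ n : ℕ, ∀ x ∈ Y, ∀ y ∈ Y, word n x = word n y →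
    |birkhoffSum shift φ n x - birkhoffSum shift φ n y| ≤ V

lemma HasBoundedDistortion.mono {Y' : Set (ℤ → Fin N)} (h : HasBoundedDistortion φ Y V)
    (hY : Y' ⊆ Y) : HasBoundedDistortion φ Y' V :=
  fun n x hx y hy => h n x (hY hx) y (hY hy)

theorem hasBoundedDistortion_of_holder {M : Fin N → Fin N → Bool} {C θ : ℝ} (hC : 0 ≤ C)
    (hθ : θ ∈ Set.Ioo (0 : ℝ) 1)
    (hH : ∀ n : ℕ, ∀ x ∈ SFT M, ∀ y ∈ SFT M, (∀ i : ℤ, |i| ≤ (n : ℤ) → x i = y i) →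
      |φ x - φ y| ≤ C * θ ^ n) :
    HasBoundedDistortion φ (SFT M) (2 * C * (1 - θ)⁻¹) := by
  intro n x hx y hy hxy
  rw [word_eq_word_iff] at hxy
  have hterm : ∀ k ∈ Finset.range n,
      |φ (shift^[k] x) - φ (shift^[k] y)| ≤ C * θ ^ k + C * θ ^ (n - 1 - k) := by
    intro k hk
    rw [Finset.mem_range] at hk
    have hagree : ∀ i : ℤ, |i| ≤ ((min k (n - 1 - k) : ℕ) : ℤ) →
        (shift^[k] x) i = (shift^[k] y) i := by
      intro i hi
      rw [abs_le] at hi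
      rw [shift_iterate_apply, shift_iterate_apply]
      have := hxy (i + k).toNat (by omega)
      rwa [Int.toNat_of_nonneg (by omega)] at this
    calc |φ (shift^[k] x) - φ (shift^[k] y)| ≤ C * θ ^ min k (n - 1 - k) :=
          hH _ _ ((mapsTo_shift_SFT M).iterate k hx) _ ((mapsTo_shift_SFT M).iterate k hy) hagree
      _ ≤ C * θ ^ k + C * θ ^ (n - 1 - k) := by
          rcases min_choice k (n - 1 - k) with h | h <;> rw [h] <;>
            nlinarith [pow_pos hθ.1 k, pow_pos hθ.1 (n - 1 - k)]
  calc |birkhoffSum shift φ n x - birkhoffSum shift φ n y|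
      = |∑ k ∈ Finset.range n, (φ (shift^[k] x) - φ (shift^[k] y))| := by
        rw [birkhoffSum, birkhoffSum, Finset.sum_sub_distrib]
    _ ≤ ∑ k ∈ Finset.range n, (C * θ ^ k + C * θ ^ (n - 1 - k)) :=
        (Finset.abs_sum_le_sum_abs _ _).trans (Finset.sum_le_sum hterm)
    _ = 2 * C * ∑ k ∈ Finset.range n, θ ^ k := by
        rw [Finset.sum_add_distrib, Finset.sum_range_reflect (fun k => C * θ ^ k) n,
          ← Finset.mul_sum]
        ring
    _ ≤ 2 * C * (1 - θ)⁻¹ := by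
        have hgeom := geom_sum_Ico_le_of_lt_one (m := 0) (n := n) hθ.1.le hθ.2
        rw [← Finset.range_eq_Ico, pow_zero, one_div] at hgeom
        exact mul_le_mul_of_nonneg_left hgeom (by positivity)

/-- Every point is within `V` of a reference point with the same zeroth symbol. -/
theorem HasBoundedDistortion.exists_abs_le (h : HasBoundedDistortion φ Y V) :
    ∃ B, ∀ x ∈ Y, |φ x| ≤ B := by
  have hsymbol : ∀ a : Fin N, ∃ c, ∀ x ∈ Y, x 0 = a → |φ x| ≤ c := by
    intro a
    by_cases ha : ∃ x₀ ∈ Y, x₀ 0 = a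
    · obtain ⟨x₀, hx₀, rfl⟩ := ha
      refine ⟨|φ x₀| + V, fun x hx hx0 => ?_⟩
      have hclose := h 1 x hx x₀ hx₀ (word_eq_word_iff.2 fun i hi => by
        obtain rfl : i = 0 := by omega
        exact hx0)
      rw [birkhoffSum_one, birkhoffSum_one] at hclose
      linarith [abs_sub_abs_le_abs_sub (φ x) (φ x₀)]
    · exact ⟨0, fun x hx hx0 => (ha ⟨x, hx, hx0⟩).elim⟩
  choose c hc using hsymbol
  obtain ⟨B, hB⟩ := Finite.bddAbove_range c
  exact ⟨B, fun x hx => (hc _ x hx rfl).trans (hB ⟨_, rfl⟩)⟩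

lemma abs_birkhoffSum_le (hY : Set.MapsTo shift Y Y) (hB : ∀ x ∈ Y, |φ x| ≤ B)
    {x : ℤ → Fin N} (hx : x ∈ Y) (n : ℕ) : |birkhoffSum shift φ n x| ≤ n * B := by
  calc |birkhoffSum shift φ n x| ≤ ∑ k ∈ Finset.range n, |φ (shift^[k] x)| :=
        Finset.abs_sum_le_sum_abs _ _
    _ ≤ ∑ _k ∈ Finset.range n, B := Finset.sum_le_sum fun k _ => hB _ (hY.iterate k hx)
    _ = n * B := by simp

theorem HasBoundedDistortion.birkhoffSum_add_le (h : HasBoundedDistortion φ Y V)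
    (hY : Set.MapsTo shift Y Y) (hB : ∀ x ∈ Y, |φ x| ≤ B) {x y z : ℤ → Fin N}
    (hx : x ∈ Y) (hy : y ∈ Y) (hz : z ∈ Y) {p ℓ q : ℕ} (hzx : word p z = word p x)
    (hzy : word q (shift^[p + ℓ] z) = word q y) :
    birkhoffSum shift φ p x + birkhoffSum shift φ q y
      ≤ birkhoffSum shift φ (p + ℓ + q) z + (2 * V + ℓ * B) := by
  have h₁ := abs_le.1 (h p z hz x hx hzx)
  have h₂ := abs_le.1 (h q _ (hY.iterate _ hz) y hy hzy)
  have h₃ := abs_le.1 (abs_birkhoffSum_le hY hB (hY.iterate p hz) ℓ)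
  rw [birkhoffSum_add, birkhoffSum_add]
  linarith

end Distortion

section PartitionFunction

variable {φ : (ℤ → Fin N) → ℝ} {Y : Set (ℤ → Fin N)} {V : ℝ}

noncomputable def cylWeight (φ : (ℤ → Fin N) → ℝ) (Y : Set (ℤ → Fin N)) {n : ℕ}
    (w : Fin n → Fin N) : ℝ :=
  if (cylSet Y w).Nonempty then Real.exp (sSup (birkhoffSum shift φ n '' cylSet Y w)) else 0

lemma partitionFn_eq_sum_cylWeight (φ : (ℤ → Fin N) → ℝ) (Y : Set (ℤ → Fin N)) (n : ℕ) :
    partitionFn φ Y n = ∑ w : Fin n → Fin N, cylWeight φ Y w :=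
  rfl

lemma cylWeight_nonneg {n : ℕ} (w : Fin n → Fin N) : 0 ≤ cylWeight φ Y w := by
  unfold cylWeight
  split_ifs <;> positivity

lemma partitionFn_nonneg (n : ℕ) : 0 ≤ partitionFn φ Y n :=
  Finset.sum_nonneg fun w _ => cylWeight_nonneg w

lemma HasBoundedDistortion.bddAbove_birkhoffSum_cylSet (h : HasBoundedDistortion φ Y V)
    {n : ℕ} (w : Fin n → Fin N) : BddAbove (birkhoffSum shift φ n '' cylSet Y w) := by
  rcases (cylSet Y w).eq_empty_or_nonempty with hw | ⟨x, hx⟩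
  · simp [hw]
  · refine ⟨birkhoffSum shift φ n x + V, ?_⟩
    rintro _ ⟨y, hy, rfl⟩
    have := h n y hy.1 x hx.1 ((word_eq_of_mem_cylSet hy).trans (word_eq_of_mem_cylSet hx).symm)
    linarith [(abs_le.1 this).2]

lemma HasBoundedDistortion.exp_birkhoffSum_le_cylWeight (h : HasBoundedDistortion φ Y V)
    {n : ℕ} {w : Fin n → Fin N} {x : ℤ → Fin N} (hx : x ∈ cylSet Y w) :
    Real.exp (birkhoffSum shift φ n x) ≤ cylWeight φ Y w := by
  rw [cylWeight, if_pos ⟨x, hx⟩]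
  exact Real.exp_le_exp.2 (le_csSup (h.bddAbove_birkhoffSum_cylSet w) ⟨x, hx, rfl⟩)

lemma HasBoundedDistortion.cylWeight_le_exp_birkhoffSum_add (h : HasBoundedDistortion φ Y V)
    {n : ℕ} {w : Fin n → Fin N} {x : ℤ → Fin N} (hx : x ∈ cylSet Y w) :
    cylWeight φ Y w ≤ Real.exp (birkhoffSum shift φ n x + V) := by
  rw [cylWeight, if_pos ⟨x, hx⟩]
  refine Real.exp_le_exp.2 (csSup_le (Set.Nonempty.image _ ⟨x, hx⟩) ?_)
  rintro _ ⟨y, hy, rfl⟩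
  have := h n y hy.1 x hx.1 ((word_eq_of_mem_cylSet hy).trans (word_eq_of_mem_cylSet hx).symm)
  linarith [(abs_le.1 this).2]

theorem HasBoundedDistortion.sum_exp_birkhoffSum_le_partitionFn
    (h : HasBoundedDistortion φ Y V) {ι : Type*} (s : Finset ι) (z : ι → ℤ → Fin N) {n : ℕ}
    (hz : ∀ i ∈ s, z i ∈ Y) (hinj : Set.InjOn (fun i => word n (z i)) s) :
    ∑ i ∈ s, Real.exp (birkhoffSum shift φ n (z i)) ≤ partitionFn φ Y n := by
  calc ∑ i ∈ s, Real.exp (birkhoffSum shift φ n (z i))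
      ≤ ∑ i ∈ s, cylWeight φ Y (word n (z i)) :=
        Finset.sum_le_sum fun i hi => h.exp_birkhoffSum_le_cylWeight (mem_cylSet_word (hz i hi) n)
    _ = ∑ w ∈ s.image fun i => word n (z i), cylWeight φ Y w := (Finset.sum_image hinj).symm
    _ ≤ partitionFn φ Y n :=
        Finset.sum_le_sum_of_subset_of_nonneg (Finset.subset_univ _)
          fun w _ _ => cylWeight_nonneg w

theorem HasBoundedDistortion.sum_exp_le_exp_mul_partitionFn (h : HasBoundedDistortion φ Y V)
    {ι : Type*} (s : Finset ι) (z : ι → ℤ → Fin N) {n : ℕ} (hz : ∀ i ∈ s, z i ∈ Y)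
    (hinj : Set.InjOn (fun i => word n (z i)) s) {g : ι → ℝ} {c : ℝ}
    (hg : ∀ i ∈ s, g i ≤ birkhoffSum shift φ n (z i) + c) :
    ∑ i ∈ s, Real.exp (g i) ≤ Real.exp c * partitionFn φ Y n := by
  calc ∑ i ∈ s, Real.exp (g i) ≤ ∑ i ∈ s, Real.exp c * Real.exp (birkhoffSum shift φ n (z i)) :=
        Finset.sum_le_sum fun i hi => by
          rw [← Real.exp_add, add_comm c]
          exact Real.exp_le_exp.2 (hg i hi)
    _ ≤ Real.exp c * partitionFn φ Y n := by
        rw [← Finset.mul_sum]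
        gcongr
        exact h.sum_exp_birkhoffSum_le_partitionFn s z hz hinj

lemma HasBoundedDistortion.exp_birkhoffSum_le_partitionFn (h : HasBoundedDistortion φ Y V)
    {x : ℤ → Fin N} (hx : x ∈ Y) (n : ℕ) :
    Real.exp (birkhoffSum shift φ n x) ≤ partitionFn φ Y n := by
  simpa using h.sum_exp_birkhoffSum_le_partitionFn {()} (fun _ => x) (fun _ _ => hx)
    (Set.injOn_of_subsingleton _ _)

lemma HasBoundedDistortion.partitionFn_pos (h : HasBoundedDistortion φ Y V) (hY : Y.Nonempty)
    (n : ℕ) : 0 < partitionFn φ Y n :=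
  (Real.exp_pos _).trans_le (h.exp_birkhoffSum_le_partitionFn hY.some_mem n)

theorem HasBoundedDistortion.exists_finset_partitionFn_le (h : HasBoundedDistortion φ Y V)
    (n : ℕ) : ∃ R : Finset (ℤ → Fin N), (∀ x ∈ R, x ∈ Y) ∧
      Set.InjOn (word n) (R : Set (ℤ → Fin N)) ∧
      partitionFn φ Y n ≤ Real.exp V * ∑ x ∈ R, Real.exp (birkhoffSum shift φ n x) := by
  set L := Finset.univ.filter fun w : Fin n → Fin N => (cylSet Y w).Nonempty
  choose x hx using fun w : L => (Finset.mem_filter.1 w.2).2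
  have hword : ∀ w, word n (x w) = w := fun w => word_eq_of_mem_cylSet (hx w)
  have hinj : Injective x := fun w w' hww => Subtype.ext <| by
    rw [← hword w, ← hword w', hww]
  refine ⟨Finset.univ.image x, ?_, ?_, ?_⟩
  · simp only [Finset.mem_image, Finset.mem_univ, true_and, forall_exists_index]
    rintro _ w rfl
    exact (hx w).1
  · simp only [Finset.coe_image, Finset.coe_univ, Set.image_univ]
    rintro _ ⟨w, rfl⟩ _ ⟨w', rfl⟩ hww
    exact congrArg x (Subtype.ext ((hword w).symm.trans (hww.trans (hword w'))))
  · have hsupp : ∀ w ∈ (Finset.univ : Finset (Fin n → Fin N)), cylWeight φ Y w ≠ 0 →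
        (cylSet Y w).Nonempty :=
      fun w _ hw => by_contra fun hne => hw (if_neg hne)
    calc partitionFn φ Y n = ∑ w ∈ L, cylWeight φ Y w := (Finset.sum_filter_of_ne hsupp).symm
      _ = ∑ w : L, cylWeight φ Y (w : Fin n → Fin N) := (Finset.sum_coe_sort L _).symm
      _ ≤ ∑ w : L, Real.exp V * Real.exp (birkhoffSum shift φ n (x w)) :=
          Finset.sum_le_sum fun w _ => (h.cylWeight_le_exp_birkhoffSum_add (hx w)).trans_eq
            (by rw [Real.exp_add, mul_comm])
      _ = Real.exp V * ∑ y ∈ Finset.univ.image x, Real.exp (birkhoffSum shift φ n y) := by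
          rw [Finset.sum_image hinj.injOn, Finset.mul_sum]

lemma mem_cylSet_append (hY : Set.MapsTo shift Y Y) {a b : ℕ} {u : Fin a → Fin N}
    {v : Fin b → Fin N} {x : ℤ → Fin N} (hx : x ∈ cylSet Y (Fin.append u v)) :
    x ∈ cylSet Y u ∧ shift^[a] x ∈ cylSet Y v := by
  refine ⟨⟨hx.1, fun i => ?_⟩, ⟨hY.iterate a hx.1, fun j => ?_⟩⟩
  · simpa using hx.2 (Fin.castAdd b i)
  · rw [shift_iterate_apply]
    simpa [add_comm] using hx.2 (Fin.natAdd a j)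

lemma HasBoundedDistortion.cylWeight_append_le (h : HasBoundedDistortion φ Y V)
    (hY : Set.MapsTo shift Y Y) {a b : ℕ} (u : Fin a → Fin N) (v : Fin b → Fin N) :
    cylWeight φ Y (Fin.append u v) ≤ cylWeight φ Y u * cylWeight φ Y v := by
  by_cases hne : (cylSet Y (Fin.append u v)).Nonempty
  · obtain ⟨x, hx⟩ := hne
    obtain ⟨hxu, hxv⟩ := mem_cylSet_append hY hx
    rw [cylWeight, if_pos ⟨x, hx⟩, cylWeight, if_pos ⟨x, hxu⟩, cylWeight, if_pos ⟨_, hxv⟩,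
      ← Real.exp_add]
    refine Real.exp_le_exp.2 (csSup_le (Set.Nonempty.image _ ⟨x, hx⟩) ?_)
    rintro _ ⟨y, hy, rfl⟩
    obtain ⟨hyu, hyv⟩ := mem_cylSet_append hY hy
    rw [birkhoffSum_add]
    exact add_le_add (le_csSup (h.bddAbove_birkhoffSum_cylSet u) ⟨y, hyu, rfl⟩)
      (le_csSup (h.bddAbove_birkhoffSum_cylSet v) ⟨_, hyv, rfl⟩)
  · rw [cylWeight, if_neg hne]
    exact mul_nonneg (cylWeight_nonneg u) (cylWeight_nonneg v)

theorem HasBoundedDistortion.partitionFn_add_le (h : HasBoundedDistortion φ Y V)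
    (hY : Set.MapsTo shift Y Y) (a b : ℕ) :
    partitionFn φ Y (a + b) ≤ partitionFn φ Y a * partitionFn φ Y b := by
  rw [partitionFn_eq_sum_cylWeight, partitionFn_eq_sum_cylWeight, partitionFn_eq_sum_cylWeight,
    Finset.sum_mul_sum, ← Fintype.sum_prod_type',
    ← (Fin.appendEquiv a b).sum_comp]
  exact Finset.sum_le_sum fun p _ => h.cylWeight_append_le hY p.1 p.2

lemma HasBoundedDistortion.subadditive_log_partitionFn (h : HasBoundedDistortion φ Y V)
    (hY : Set.MapsTo shift Y Y) (hne : Y.Nonempty) :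
    Subadditive fun n => Real.log (partitionFn φ Y n) := fun a b => by
  rw [← Real.log_mul (h.partitionFn_pos hne a).ne' (h.partitionFn_pos hne b).ne']
  exact Real.log_le_log (h.partitionFn_pos hne _) (h.partitionFn_add_le hY a b)

lemma HasBoundedDistortion.bddBelow_log_partitionFn_div (h : HasBoundedDistortion φ Y V)
    (hY : Set.MapsTo shift Y Y) (hne : Y.Nonempty) :
    BddBelow (Set.range fun n : ℕ => Real.log (partitionFn φ Y n) / n) := by
  obtain ⟨B, hB⟩ := h.exists_abs_le
  obtain ⟨x, hx⟩ := hne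
  refine ⟨-B, ?_⟩
  rintro _ ⟨n, rfl⟩
  rcases Nat.eq_zero_or_pos n with rfl | hn
  · simpa using (abs_nonneg _).trans (hB x hx)
  · rw [le_div_iff₀ (by exact_mod_cast hn)]
    have hlog := Real.log_le_log (Real.exp_pos _) (h.exp_birkhoffSum_le_partitionFn hx n)
    rw [Real.log_exp] at hlog
    linarith [(abs_le.1 (abs_birkhoffSum_le hY hB hx n)).1]

theorem HasBoundedDistortion.tendsto_log_partitionFn_div (h : HasBoundedDistortion φ Y V)
    (hY : Set.MapsTo shift Y Y) (hne : Y.Nonempty) :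
    Tendsto (fun n : ℕ => Real.log (partitionFn φ Y n) / n) atTop (𝓝 (pressure φ Y)) := by
  have := (h.subadditive_log_partitionFn hY hne).tendsto_lim
    (h.bddBelow_log_partitionFn_div hY hne)
  rwa [pressure, this.limsup_eq]

theorem HasBoundedDistortion.pressure_le_log_partitionFn_div (h : HasBoundedDistortion φ Y V)
    (hY : Set.MapsTo shift Y Y) (hne : Y.Nonempty) {n : ℕ} (hn : n ≠ 0) :
    pressure φ Y ≤ Real.log (partitionFn φ Y n) / n := by
  have hsub := h.subadditive_log_partitionFn hY hne
  have hbdd := h.bddBelow_log_partitionFn_div hY hne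
  rw [pressure, (hsub.tendsto_lim hbdd).limsup_eq]
  exact hsub.lim_le_div hbdd hn

end PartitionFunction

section Splice

/-- All entries of `M ^ m` are positive. -/
def HasPathsOfLength (M : Fin N → Fin N → Bool) (m : ℕ) : Prop :=
  ∀ a b : Fin N, ∃ β : ℕ → Fin N, β 0 = a ∧ β m = b ∧ ∀ k < m, M (β k) (β (k + 1)) = true

theorem HasPathsOfLength.exists_path_via {M : Fin N → Fin N → Bool} {m : ℕ}
    (h : HasPathsOfLength M m) (a c b : Fin N) :
    ∃ β : ℕ → Fin N, β 0 = a ∧ β m = c ∧ β (2 * m) = b ∧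
      ∀ k < 2 * m, M (β k) (β (k + 1)) = true := by
  obtain ⟨β₁, h₁0, h₁m, h₁⟩ := h a c
  obtain ⟨β₂, h₂0, h₂m, h₂⟩ := h c b
  set β : ℕ → Fin N := fun k => if k ≤ m then β₁ k else β₂ (k - m)
  have hβ₂ : ∀ k, m ≤ k → β k = β₂ (k - m) := by
    intro k hk
    by_cases hkm : k ≤ m
    · obtain rfl : k = m := le_antisymm hkm hk
      simp [β, h₁m, h₂0]
    · simp [β, hkm]
  refine ⟨β, by simp [β, h₁0], by simp [β, h₁m], ?_, fun k hk => ?_⟩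
  · rw [hβ₂ _ (by omega), show 2 * m - m = m by omega, h₂m]
  · rcases lt_or_ge k m with hkm | hkm
    · simpa [β, hkm.le, Nat.succ_le_of_lt hkm] using h₁ k hkm
    · rw [hβ₂ k hkm, hβ₂ (k + 1) (by omega), show k + 1 - m = k - m + 1 by omega]
      exact h₂ _ (by omega)

def splice (x y : ℤ → Fin N) (β : ℕ → Fin N) (p : ℤ) (m : ℕ) : ℤ → Fin N := fun i =>
  if i ≤ p then x i else if i < p + m then β (i - p).toNat else y (i - (p + m))

variable {x y : ℤ → Fin N} {β : ℕ → Fin N} {p : ℤ} {m : ℕ}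

lemma splice_of_le {i : ℤ} (hi : i ≤ p) : splice x y β p m i = x i :=
  if_pos hi

lemma splice_of_mem (hβ0 : β 0 = x p) (hβm : β m = y 0) {i : ℤ} (hpi : p ≤ i)
    (hip : i ≤ p + m) : splice x y β p m i = β (i - p).toNat := by
  unfold splice
  split_ifs with h₁ h₂
  · rw [show i = p by omega, sub_self, Int.toNat_zero, hβ0]
  · rfl
  · rw [show i = p + m by omega, sub_self, show (p + m - p).toNat = m by omega, hβm]

lemma splice_of_ge (hβ0 : β 0 = x p) (hβm : β m = y 0) {i : ℤ} (hi : p + m ≤ i) :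
    splice x y β p m i = y (i - (p + m)) := by
  by_cases hip : i ≤ p + m
  · rw [splice_of_mem hβ0 hβm (by omega) hip, show i - (p + m) = 0 by omega,
      show (i - p).toNat = m by omega, hβm]
  · simp only [splice]
    rw [if_neg (by omega), if_neg (by omega)]

theorem splice_mem_SFT {M : Fin N → Fin N → Bool} (hx : x ∈ SFT M) (hy : y ∈ SFT M)
    (hβ0 : β 0 = x p) (hβm : β m = y 0) (hβ : ∀ k < m, M (β k) (β (k + 1)) = true) :
    splice x y β p m ∈ SFT M := by
  intro i
  rcases lt_or_ge i p with hip | hip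
  · rw [splice_of_le hip.le, splice_of_le (by omega)]
    exact hx i
  rcases lt_or_ge i (p + m) with him | him
  · rw [splice_of_mem hβ0 hβm hip him.le, splice_of_mem hβ0 hβm (by omega) (by omega),
      show (i + 1 - p).toNat = (i - p).toNat + 1 by omega]
    exact hβ _ (by omega)
  · rw [splice_of_ge hβ0 hβm him, splice_of_ge hβ0 hβm (by omega),
      show i + 1 - (p + m) = i - (p + m) + 1 by ring]
    exact hy _

end Splice

section Gluing

variable {M : Fin N → Fin N → Bool} {m a : ℕ} {β : Fin N → Fin N → ℕ → Fin N}
  {x y x' y' : ℤ → Fin N}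

/-- `x`, then the `m`-step path `β (x (a - 1)) (y 0)`, then `y` with its coordinate `0` at
`a + m - 1`. -/
def glue (β : Fin N → Fin N → ℕ → Fin N) (m a : ℕ) (x y : ℤ → Fin N) : ℤ → Fin N :=
  splice x y (β (x (a - 1)) (y 0)) (a - 1) m

lemma word_glue : word a (glue β m a x y) = word a x :=
  word_eq_word_iff.2 fun _ _ => splice_of_le (by omega)

lemma word_shift_glue (hβ0 : ∀ a b, β a b 0 = a) (hβm : ∀ a b, β a b m = b) (hm : 1 ≤ m)
    (b : ℕ) : word b (shift^[a + (m - 1)] (glue β m a x y)) = word b y :=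
  word_eq_word_iff.2 fun _ _ => by
    rw [shift_iterate_apply, glue, splice_of_ge (hβ0 _ _) (hβm _ _) (by omega)]
    exact congrArg y (by push_cast; omega)

lemma glue_mem_SFT (hβ0 : ∀ a b, β a b 0 = a) (hβm : ∀ a b, β a b m = b)
    (hβ : ∀ a b, ∀ k < m, M (β a b k) (β a b (k + 1)) = true) (hx : x ∈ SFT M)
    (hy : y ∈ SFT M) : glue β m a x y ∈ SFT M :=
  splice_mem_SFT hx hy (hβ0 _ _) (hβm _ _) (hβ _ _)

lemma word_glue_injective (hβ0 : ∀ a b, β a b 0 = a) (hβm : ∀ a b, β a b m = b) (hm : 1 ≤ m)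
    {b : ℕ} (h : word (a + (m - 1) + b) (glue β m a x y)
      = word (a + (m - 1) + b) (glue β m a x' y')) :
    word a x = word a x' ∧ word b y = word b y' := by
  obtain ⟨h₁, h₂⟩ := word_add_eq_word_add_iff.1 h
  rw [word_shift_glue hβ0 hβm hm, word_shift_glue hβ0 hβm hm] at h₂
  rw [← word_glue (β := β) (m := m) (y := y), ← word_glue (β := β) (m := m) (x := x') (y := y')]
  exact ⟨(word_add_eq_word_add_iff.1 h₁).1, h₂⟩

theorem HasBoundedDistortion.exists_partitionFn_mul_le {φ : (ℤ → Fin N) → ℝ} {V : ℝ}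
    (hφ : HasBoundedDistortion φ (SFT M) V) (hM : HasPathsOfLength M m) (hm : 1 ≤ m) :
    ∃ D, ∀ a b : ℕ, partitionFn φ (SFT M) a * partitionFn φ (SFT M) b
      ≤ Real.exp D * partitionFn φ (SFT M) (a + (m - 1) + b) := by
  obtain ⟨B, hB⟩ := hφ.exists_abs_le
  choose β hβ0 hβm hβ using hM
  refine ⟨4 * V + (m - 1 : ℕ) * B, fun a b => ?_⟩
  obtain ⟨Ra, hRa, hRa_inj, hZa⟩ := hφ.exists_finset_partitionFn_le a
  obtain ⟨Rb, hRb, hRb_inj, hZb⟩ := hφ.exists_finset_partitionFn_le b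
  set z : (ℤ → Fin N) × (ℤ → Fin N) → ℤ → Fin N := fun q => glue β m a q.1 q.2
  have hz : ∀ q ∈ Ra ×ˢ Rb, z q ∈ SFT M := fun q hq =>
    glue_mem_SFT hβ0 hβm hβ (hRa _ (Finset.mem_product.1 hq).1) (hRb _ (Finset.mem_product.1 hq).2)
  have hinj : Set.InjOn (fun q => word (a + (m - 1) + b) (z q)) ↑(Ra ×ˢ Rb) := by
    rintro q hq q' hq' hqq
    simp only [Finset.coe_product, Set.mem_prod, Finset.mem_coe] at hq hq'
    obtain ⟨hx, hy⟩ := word_glue_injective hβ0 hβm hm hqq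
    exact Prod.ext (hRa_inj hq.1 hq'.1 hx) (hRb_inj hq.2 hq'.2 hy)
  calc partitionFn φ (SFT M) a * partitionFn φ (SFT M) b
      ≤ (Real.exp V * ∑ x ∈ Ra, Real.exp (birkhoffSum shift φ a x)) *
          (Real.exp V * ∑ y ∈ Rb, Real.exp (birkhoffSum shift φ b y)) :=
        mul_le_mul hZa hZb (partitionFn_nonneg b) (by positivity)
    _ = Real.exp (2 * V) * ∑ q ∈ Ra ×ˢ Rb,
          Real.exp (birkhoffSum shift φ a q.1 + birkhoffSum shift φ b q.2) := by
        rw [Finset.sum_product, mul_mul_mul_comm, Finset.sum_mul_sum, ← Real.exp_add, ← two_mul]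
        simp_rw [Real.exp_add]
    _ ≤ Real.exp (2 * V) * (Real.exp (2 * V + (m - 1 : ℕ) * B) *
          partitionFn φ (SFT M) (a + (m - 1) + b)) := by
        gcongr
        refine hφ.sum_exp_le_exp_mul_partitionFn _ z hz hinj fun q hq => ?_
        obtain ⟨hx, hy⟩ := Finset.mem_product.1 hq
        exact hφ.birkhoffSum_add_le (mapsTo_shift_SFT M) hB (hRa _ hx) (hRb _ hy) (hz q hq)
          word_glue (word_shift_glue hβ0 hβm hm b)
    _ = _ := by
        rw [← mul_assoc, ← Real.exp_add]
        ring_nf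

end Gluing

section Detour

variable {M : Fin N → Fin N → Bool} {m p : ℕ} {e : Fin N} {γ : Fin N → Fin N → ℕ → Fin N}
  {x : ℤ → Fin N}

/-- `x` with the `2 * m`-step path `γ (x p) (x (p + 1))` inserted between its coordinates `p`
and `p + 1`. -/
def detour (γ : Fin N → Fin N → ℕ → Fin N) (m p : ℕ) (x : ℤ → Fin N) : ℤ → Fin N :=
  splice x (shift^[p + 1] x) (γ (x p) (x (p + 1))) p (2 * m)

lemma detour_of_le {i : ℤ} (hi : i ≤ p) : detour γ m p x i = x i :=
  splice_of_le hi

lemma detour_path_end (hγ2m : ∀ a b, γ a b (2 * m) = b) :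
    γ (x p) (x (p + 1)) (2 * m) = (shift^[p + 1] x) 0 := by
  rw [hγ2m, shift_iterate_apply]
  push_cast
  ring_nf

lemma detour_mid (hγ0 : ∀ a b, γ a b 0 = a) (hγ2m : ∀ a b, γ a b (2 * m) = b)
    (hγm : ∀ a b, γ a b m = e) : detour γ m p x (p + m) = e := by
  rw [detour, splice_of_mem (hγ0 _ _) (detour_path_end hγ2m) (by omega) (by omega),
    show ((p : ℤ) + m - p).toNat = m by omega, hγm]

lemma word_detour (n : ℕ) (hn : n ≤ p + 1) : word n (detour γ m p x) = word n x :=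
  word_eq_word_iff.2 fun _ hi => detour_of_le (by omega)

lemma word_shift_detour (hγ0 : ∀ a b, γ a b 0 = a) (hγ2m : ∀ a b, γ a b (2 * m) = b)
    (hm : 1 ≤ m) (q : ℕ) :
    word q (shift^[p + 1 + (2 * m - 1)] (detour γ m p x)) = word q (shift^[p + 1] x) :=
  word_eq_word_iff.2 fun i _ => by
    rw [shift_iterate_apply, detour, splice_of_ge (hγ0 _ _) (detour_path_end hγ2m) (by omega)]
    exact congrArg _ (by push_cast; omega)

lemma detour_mem_SFT (hγ0 : ∀ a b, γ a b 0 = a) (hγ2m : ∀ a b, γ a b (2 * m) = b)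
    (hγ : ∀ a b, ∀ k < 2 * m, M (γ a b k) (γ a b (k + 1)) = true) (hx : x ∈ SFT M) :
    detour γ m p x ∈ SFT M :=
  splice_mem_SFT hx ((mapsTo_shift_SFT M).iterate _ hx) (hγ0 _ _) (detour_path_end hγ2m)
    (hγ _ _)

theorem HasBoundedDistortion.birkhoffSum_le_detour {φ : (ℤ → Fin N) → ℝ} {V B : ℝ}
    (hφ : HasBoundedDistortion φ (SFT M) V) (hB : ∀ x ∈ SFT M, |φ x| ≤ B)
    (hγ0 : ∀ a b, γ a b 0 = a) (hγ2m : ∀ a b, γ a b (2 * m) = b)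
    (hγ : ∀ a b, ∀ k < 2 * m, M (γ a b k) (γ a b (k + 1)) = true) (hm : 1 ≤ m)
    (hx : x ∈ SFT M) {n : ℕ} (hpn : p < n) :
    birkhoffSum shift φ n x
      ≤ birkhoffSum shift φ (n + (2 * m - 1)) (detour γ m p x) + (2 * V + (2 * m - 1 : ℕ) * B) := by
  obtain ⟨q, rfl⟩ : ∃ q, n = p + 1 + q := ⟨n - (p + 1), by omega⟩
  rw [birkhoffSum_add, show p + 1 + q + (2 * m - 1) = p + 1 + (2 * m - 1) + q by omega]
  exact hφ.birkhoffSum_add_le (mapsTo_shift_SFT M) hB hx ((mapsTo_shift_SFT M).iterate _ hx)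
    (detour_mem_SFT hγ0 hγ2m hγ hx) (word_detour _ le_rfl) (word_shift_detour hγ0 hγ2m hm q)

/-- Detours at different slots are told apart by the position of the inserted `e`. -/
lemma word_detour_ne (hγ0 : ∀ a b, γ a b 0 = a) (hγ2m : ∀ a b, γ a b (2 * m) = b)
    (hγm : ∀ a b, γ a b m = e) (hm : 1 ≤ m) {j j' K : ℕ} (hjj' : j < j') (hj' : j' < K)
    {x' : ℤ → Fin N} (hx' : ∀ n, x' n ≠ e) :
    word (K * m + (2 * m - 1)) (detour γ m (j * m) x)
      ≠ word (K * m + (2 * m - 1)) (detour γ m (j' * m) x') := by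
  intro h
  have hle : j * m + m ≤ j' * m := by nlinarith
  have hlt : j * m + m < K * m + (2 * m - 1) := by
    have : j' * m + m ≤ K * m := by nlinarith
    omega
  have := congrFun h ⟨j * m + m, hlt⟩
  simp only [word, Nat.cast_add] at this
  rw [detour_mid hγ0 hγ2m hγm, detour_of_le (by exact_mod_cast hle)] at this
  exact hx' _ this.symm

lemma word_detour_injective (hγ0 : ∀ a b, γ a b 0 = a) (hγ2m : ∀ a b, γ a b (2 * m) = b)
    (hγm : ∀ a b, γ a b m = e) (hm : 1 ≤ m) {j j' K : ℕ} (hj : j < K) (hj' : j' < K)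
    {x' : ℤ → Fin N} (hx : ∀ n, x n ≠ e) (hx' : ∀ n, x' n ≠ e)
    (h : word (K * m + (2 * m - 1)) (detour γ m (j * m) x)
      = word (K * m + (2 * m - 1)) (detour γ m (j' * m) x')) :
    j = j' ∧ word (K * m) x = word (K * m) x' := by
  obtain rfl : j = j' := by
    rcases lt_trichotomy j j' with hlt | heq | hgt
    · exact absurd h (word_detour_ne hγ0 hγ2m hγm hm hlt hj' hx')
    · exact heq
    · exact absurd h.symm (word_detour_ne hγ0 hγ2m hγm hm hgt hj hx)
  obtain ⟨q, hq⟩ : ∃ q, K * m = j * m + 1 + q := by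
    have : j * m + m ≤ K * m := by nlinarith
    exact ⟨K * m - (j * m + 1), by omega⟩
  rw [hq, show j * m + 1 + q + (2 * m - 1) = j * m + 1 + (2 * m - 1) + q by omega] at h
  obtain ⟨h₁, h₂⟩ := word_add_eq_word_add_iff.1 h
  rw [hq, word_add_eq_word_add_iff, ← word_detour (γ := γ) (m := m) _ le_rfl,
    ← word_detour (γ := γ) (m := m) (x := x') _ le_rfl, ← word_shift_detour hγ0 hγ2m hm,
    ← word_shift_detour (x := x') hγ0 hγ2m hm]
  exact ⟨rfl, (word_add_eq_word_add_iff.1 h₁).1, h₂⟩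

end Detour

section Gap

variable {M : Fin N → Fin N → Bool} {φ : (ℤ → Fin N) → ℝ} {V : ℝ} {m : ℕ}

lemma mapsTo_shift_avoiding (M : Fin N → Fin N → Bool) (e : Fin N) :
    Set.MapsTo shift {x ∈ SFT M | ∀ n : ℤ, x n ≠ e} {x ∈ SFT M | ∀ n : ℤ, x n ≠ e} :=
  fun _ hx => ⟨mapsTo_shift_SFT M hx.1, fun n => hx.2 (n + 1)⟩

/-- Each of the `K` slots `j * m` of a word avoiding `e` can receive a detour through `e`; the
resulting words are pairwise distinct and each loses only a bounded factor of weight. -/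
theorem HasBoundedDistortion.exists_mul_partitionFn_avoiding_le
    (hφ : HasBoundedDistortion φ (SFT M) V) (hM : HasPathsOfLength M m) (hm : 1 ≤ m)
    (e : Fin N) :
    ∃ D, ∀ K : ℕ, K * partitionFn φ {x ∈ SFT M | ∀ n : ℤ, x n ≠ e} (K * m)
      ≤ Real.exp D * partitionFn φ (SFT M) (K * m + (2 * m - 1)) := by
  obtain ⟨B, hB⟩ := hφ.exists_abs_le
  choose γ hγ0 hγm hγ2m hγ using fun a b => hM.exists_path_via a e b
  refine ⟨3 * V + (2 * m - 1 : ℕ) * B, fun K => ?_⟩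
  obtain ⟨R, hRY, hR_inj, hZ⟩ :=
    (hφ.mono (Set.sep_subset _ _)).exists_finset_partitionFn_le (K * m)
  set z : ℕ × (ℤ → Fin N) → ℤ → Fin N := fun q => detour γ m (q.1 * m) q.2
  have hz : ∀ q ∈ Finset.range K ×ˢ R, z q ∈ SFT M := fun q hq =>
    detour_mem_SFT hγ0 hγ2m hγ (hRY _ (Finset.mem_product.1 hq).2).1
  have hinj : Set.InjOn (fun q => word (K * m + (2 * m - 1)) (z q)) ↑(Finset.range K ×ˢ R) := by
    rintro ⟨j, x⟩ hq ⟨j', x'⟩ hq' h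
    simp only [Finset.coe_product, Set.mem_prod, Finset.coe_range, Set.mem_Iio,
      Finset.mem_coe] at hq hq'
    obtain ⟨rfl, hw⟩ := word_detour_injective hγ0 hγ2m hγm hm hq.1 hq'.1 (hRY _ hq.2).2
      (hRY _ hq'.2).2 h
    rw [hR_inj hq.2 hq'.2 hw]
  calc (K : ℝ) * partitionFn φ {x ∈ SFT M | ∀ n : ℤ, x n ≠ e} (K * m)
      ≤ K * (Real.exp V * ∑ x ∈ R, Real.exp (birkhoffSum shift φ (K * m) x)) := by gcongr
    _ = Real.exp V * ∑ q ∈ Finset.range K ×ˢ R, Real.exp (birkhoffSum shift φ (K * m) q.2) := by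
        simp only [Finset.sum_product, Finset.sum_const, Finset.card_range, nsmul_eq_mul]
        ring
    _ ≤ Real.exp V * (Real.exp (2 * V + (2 * m - 1 : ℕ) * B) *
          partitionFn φ (SFT M) (K * m + (2 * m - 1))) := by
        gcongr
        refine hφ.sum_exp_le_exp_mul_partitionFn _ z hz hinj fun q hq => ?_
        obtain ⟨hj, hx⟩ := Finset.mem_product.1 hq
        refine hφ.birkhoffSum_le_detour hB hγ0 hγ2m hγ hm (hRY _ hx).1 ?_
        have : q.1 + 1 ≤ K := Finset.mem_range.1 hj
        nlinarith
    _ = _ := by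
        rw [← mul_assoc, ← Real.exp_add]
        ring_nf

end Gap

theorem le_mul_of_tendsto_div {f : ℕ → ℝ} {P g c : ℝ} {L a : ℕ}
    (hf : Tendsto (fun n : ℕ => f n / n) atTop (𝓝 P)) (hL : 1 ≤ L) (ha : 1 ≤ a)
    (h : ∀ k : ℕ, (k + 1) * g + c ≤ f (k * L + a)) : g ≤ L * P := by
  have hlow : Tendsto (fun k : ℕ => g + c * (1 / ((k : ℝ) + 1))) atTop (𝓝 g) := by
    simpa using (tendsto_one_div_add_atTop_nhds_zero_nat.const_mul c).const_add g
  have hratio : Tendsto (fun k : ℕ => (L : ℝ) + (a - L) * (1 / ((k : ℝ) + 1))) atTop (𝓝 L) := by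
    simpa using (tendsto_one_div_add_atTop_nhds_zero_nat.const_mul ((a : ℝ) - L)).const_add (L : ℝ)
  have hidx : Tendsto (fun k => k * L + a) atTop atTop :=
    tendsto_atTop_mono (fun k => show k ≤ k * L + a by nlinarith) tendsto_id
  rw [mul_comm]
  refine le_of_tendsto_of_tendsto' hlow ((hf.comp hidx).mul hratio) fun k => ?_
  have hk : (0 : ℝ) < k + 1 := by positivity
  have hn : (0 : ℝ) < k * L + a := by
    have : (1 : ℝ) ≤ a := by exact_mod_cast ha
    positivity
  calc g + c * (1 / ((k : ℝ) + 1)) = ((k + 1) * g + c) / (k + 1) := by field_simp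
    _ ≤ f (k * L + a) / (k + 1) := div_le_div_of_nonneg_right (h k) hk.le
    _ = _ := by
        simp only [Function.comp, Nat.cast_add, Nat.cast_mul]
        field_simp
        ring

/-- Iterate the gap inequality along `k * (a + s) + a` and compare with the limit. -/
theorem le_mul_add_of_tendsto_div {f : ℕ → ℝ} {P D : ℝ} {s : ℕ}
    (hf : Tendsto (fun n : ℕ => f n / n) atTop (𝓝 P))
    (hsup : ∀ a b, f a + f b ≤ D + f (a + s + b)) {a : ℕ} (ha : 1 ≤ a) :
    f a ≤ (a + s) * P + D := by
  have hiter : ∀ k : ℕ, (k + 1) * (f a - D) + D ≤ f (k * (a + s) + a) := by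
    intro k
    induction k with
    | zero => simp
    | succ k ih =>
      have := hsup (k * (a + s) + a) a
      rw [show (k + 1) * (a + s) + a = k * (a + s) + a + s + a by ring]
      push_cast
      linarith
  have := le_mul_of_tendsto_div hf (by omega) ha hiter
  push_cast at this
  linarith

theorem HasBoundedDistortion.exists_log_partitionFn_le {M : Fin N → Fin N → Bool}
    {φ : (ℤ → Fin N) → ℝ} {V : ℝ} {m : ℕ} (hφ : HasBoundedDistortion φ (SFT M) V)
    (hM : HasPathsOfLength M m) (hm : 1 ≤ m) (hne : (SFT M).Nonempty) :
    ∃ D, ∀ n, 1 ≤ n →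
      Real.log (partitionFn φ (SFT M) n) ≤ n * pressure φ (SFT M) + D := by
  obtain ⟨D, hD⟩ := hφ.exists_partitionFn_mul_le hM hm
  have hpos := hφ.partitionFn_pos hne
  refine ⟨(m - 1 : ℕ) * pressure φ (SFT M) + D, fun n hn => ?_⟩
  have := le_mul_add_of_tendsto_div (s := m - 1) (D := D)
    (hφ.tendsto_log_partitionFn_div (mapsTo_shift_SFT M) hne) (fun a b => ?_) hn
  · linarith
  · rw [← Real.log_mul (hpos a).ne' (hpos b).ne', ← Real.log_exp D,
      ← Real.log_mul (Real.exp_pos D).ne' (hpos _).ne']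
    exact Real.log_le_log (mul_pos (hpos a) (hpos b)) (hD a b)

/-- Removing a symbol from a topologically mixing subshift of finite type creates a
strict pressure gap: `P_top(φ, Σ') < P_top(φ, Σ_A)` for a Hölder potential `φ`. -/
theorem pressure_gap
    {N : ℕ} (hN : 2 ≤ N) (M : Fin N → Fin N → Bool) (φ : (ℤ → Fin N) → ℝ)
    -- `φ` is Hölder continuous on the subshift
    (hHolder : ∃ C > (0 : ℝ), ∃ θ ∈ Set.Ioo (0 : ℝ) 1, ∀ n : ℕ,
      ∀ x ∈ SFT M, ∀ y ∈ SFT M, (∀ i : ℤ, |i| ≤ (n : ℤ) → x i = y i) →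
        |φ x - φ y| ≤ C * θ ^ n)
    -- the full subshift is topologically mixing (primitive transition matrix)
    (hmix : ∃ m : ℕ, 1 ≤ m ∧ ∀ a b : Fin N, ∃ w : ℕ → Fin N,
      w 0 = a ∧ w m = b ∧ ∀ k < m, M (w k) (w (k + 1)) = true)
    -- the subshift avoiding the first symbol is nonempty
    (hne : ({x ∈ SFT M | ∀ n : ℤ, x n ≠ (⟨0, by omega⟩ : Fin N)} : Set (ℤ → Fin N)).Nonempty) :
    pressure φ {x ∈ SFT M | ∀ n : ℤ, x n ≠ (⟨0, by omega⟩ : Fin N)}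
      < pressure φ (SFT M) := by
  obtain ⟨C, hC, θ, hθ, hH⟩ := hHolder
  obtain ⟨m, hm, hM⟩ := hmix
  have hφ := hasBoundedDistortion_of_holder hC.le hθ hH
  set Y' := {x ∈ SFT M | ∀ n : ℤ, x n ≠ (⟨0, by omega⟩ : Fin N)}
  have hφ' := hφ.mono (Set.sep_subset _ _ : Y' ⊆ SFT M)
  obtain ⟨D₁, hD₁⟩ := hφ.exists_mul_partitionFn_avoiding_le hM hm ⟨0, by omega⟩
  obtain ⟨D₂, hD₂⟩ := hφ.exists_log_partitionFn_le hM hm (hne.mono (Set.sep_subset _ _))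
  by_contra! hle
  obtain ⟨K, hK⟩ := exists_nat_gt (Real.exp (D₁ + D₂ + (2 * m - 1 : ℕ) * pressure φ (SFT M)))
  have hK0 : 0 < (K : ℝ) := (Real.exp_pos _).trans hK
  have hn : K * m ≠ 0 := Nat.mul_ne_zero (by exact_mod_cast hK0.ne') (by omega)
  have hZ' := hφ'.partitionFn_pos hne (K * m)
  have hlower : (K * m : ℕ) * pressure φ Y' ≤ Real.log (partitionFn φ Y' (K * m)) :=
    (le_div_iff₀' (by positivity)).1 (hφ'.pressure_le_log_partitionFn_div
      (mapsTo_shift_avoiding M _) hne hn)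
  have hinsert : Real.log K + Real.log (partitionFn φ Y' (K * m))
      ≤ D₁ + Real.log (partitionFn φ (SFT M) (K * m + (2 * m - 1))) := by
    rw [← Real.log_mul hK0.ne' hZ'.ne', ← Real.log_exp D₁, ← Real.log_mul (Real.exp_pos _).ne'
      (hφ.partitionFn_pos (hne.mono (Set.sep_subset _ _)) _).ne']
    exact Real.log_le_log (mul_pos hK0 hZ') (hD₁ K)
  have hupper := hD₂ (K * m + (2 * m - 1)) (by omega)
  have hlogK := (Real.lt_log_iff_exp_lt hK0).2 hK
  have hgap := mul_le_mul_of_nonneg_left hle (by positivity : (0 : ℝ) ≤ K * m)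
  push_cast at hlower hupper
  linarith
end
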